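/- Let (ξ_j)_{j=1}^n be a time-homogeneous Markov process on a Polish space (X,d) with initial distribution P^{(1)} and transition kernel p(·|x), each satisfying GC(κ₁) (Gaussian concentration with constant κ₁), and suppose x ↦ p(·|x) is L-Lipschitz from (X,d) to (Prob_1(X), W_1). Then the joint law P^{(n)} on (X^n, d^{(1)}) satisfies GC(κ_n) with κ_n = κ₁ Σ_{m=1}^n (Σ_{k=0}^{m-1} L^k)². -/

import Mathlib

/-!
Induct on the number of coordinates, integrating out the last one. If `F` is Lipschitz for a
weighted `ℓ¹` distance `∑ cᵢ d(xᵢ, yᵢ)`, then conditionally on the first coordinates it is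
`c_{n+1}`-Lipschitz in the last, so `GC(κ₁)` of the kernel costs a factor `exp (κ₁ c_{n+1}² t² / 2)`
and leaves the conditional expectation `G`. Since a `K`-Lipschitz test function integrates to
within `K W₁(μ, ν)` under any two measures, and `x ↦ p(·|x)` is `L`-Lipschitz into `W₁`, `G` is
Lipschitz with the same weights except `cₙ + L c_{n+1}` in place of `cₙ`. Starting from unit
weights, coordinate `i` ends up with weight `∑_{j ≥ i} L^{j-i}`, and the squares of these weights
add up to the constant of the theorem.

`GC(κ)` is assumed only for integrable functions and in terms of Bochner integrals, so one first
shows that a `GC` measure integrates every Lipschitz function and that the inequality also holds for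
lower Lebesgue integrals, which is the form the Tonelli step needs.
-/

open MeasureTheory ProbabilityTheory Real Finset

variable {X : Type*} [MetricSpace X] [MeasurableSpace X]

/-- A measure `μ` satisfies the Gaussian concentration inequality `GC(κ)`:
`∫ exp(tF) dμ ≤ exp(t ∫ F dμ + κ t²/2)` for every integrable `1`-Lipschitz `F`. -/
def GaussianConcentration (κ : ℝ) (μ : Measure X) : Prop :=
  ∀ F : X → ℝ, LipschitzWith 1 F → Integrable F μ → ∀ t : ℝ,
    ∫ x, Real.exp (t * F x) ∂μ ≤ Real.exp (t * ∫ x, F x ∂μ + κ * t ^ 2 / 2)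

/-- The order-1 Wasserstein distance (over couplings with integrable cost). -/
noncomputable def wasserstein1 (μ ν : Measure X) : ℝ :=
  sInf { c | ∃ cpl : Measure (X × X), cpl.map Prod.fst = μ ∧ cpl.map Prod.snd = ν ∧
    Integrable (fun z => dist z.1 z.2) cpl ∧ c = ∫ z, dist z.1 z.2 ∂cpl }

/-- The joint law of the first `n+1` variables of the time-homogeneous Markov process
with initial distribution `P1` and transition kernel `p`. -/
noncomputable def markovJointLaw (P1 : Measure X) (p : Kernel X X) :
    (n : ℕ) → Measure (Fin (n + 1) → X)
  | 0 => P1.map (fun x => fun _ => x)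
  | n + 1 => (markovJointLaw P1 p n).bind
      (fun xs => (p (xs (Fin.last n))).map (fun y => Fin.snoc xs y))

open scoped NNReal ENNReal
open Filter Topology

theorem LipschitzWith.integrable_of_integrable_dist [OpensMeasurableSpace X] {μ : Measure X}
    [IsFiniteMeasure μ] {K : ℝ≥0} {f : X → ℝ} (hf : LipschitzWith K f) {x₀ : X}
    (hd : Integrable (fun x => dist x x₀) μ) : Integrable f μ := by
  refine ((integrable_const |f x₀|).add (hd.const_mul K)).mono'
    hf.continuous.aestronglyMeasurable (ae_of_all _ fun x => ?_)
  have := hf.dist_le_mul x x₀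
  rw [Real.dist_eq] at this
  rw [Real.norm_eq_abs, Pi.add_apply]
  linarith [abs_sub_abs_le_abs_sub (f x) (f x₀)]

theorem integrable_of_integral_min_le {α : Type*} [MeasurableSpace α] {μ : Measure α}
    [IsFiniteMeasure μ] {g : α → ℝ} (hg : Measurable g) (hg0 : ∀ x, 0 ≤ g x) {B : ℝ}
    (hB : ∀ N : ℕ, ∫ x, min (g x) N ∂μ ≤ B) : Integrable g μ := by
  have hgN_nonneg (N : ℕ) (x : α) : 0 ≤ min (g x) N := le_min (hg0 x) N.cast_nonneg
  have hgN_int (N : ℕ) : Integrable (fun x => min (g x) N) μ :=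
    .of_bound (hg.min measurable_const).aestronglyMeasurable N (ae_of_all _ fun x => by
      rw [Real.norm_eq_abs, abs_of_nonneg (hgN_nonneg N x)]; exact min_le_right _ _)
  have hsup (x : α) : ENNReal.ofReal (g x) = ⨆ N : ℕ, ENNReal.ofReal (min (g x) N) := by
    obtain ⟨N, hN⟩ := exists_nat_ge (g x)
    refine le_antisymm (le_iSup_of_le N ?_) (iSup_le fun N => ?_)
    · exact (congrArg ENNReal.ofReal (min_eq_left hN)).ge
    · exact ENNReal.ofReal_le_ofReal (min_le_left _ _)
  refine ⟨hg.aestronglyMeasurable, ?_⟩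
  rw [hasFiniteIntegral_iff_ofReal (ae_of_all _ hg0)]
  calc ∫⁻ x, ENNReal.ofReal (g x) ∂μ = ⨆ N : ℕ, ∫⁻ x, ENNReal.ofReal (min (g x) N) ∂μ := by
        simp_rw [hsup]
        exact lintegral_iSup (fun N => (hg.min measurable_const).ennreal_ofReal)
          fun i j hij x => ENNReal.ofReal_le_ofReal (min_le_min le_rfl (by exact_mod_cast hij))
    _ ≤ ENNReal.ofReal B := iSup_le fun N => by
        rw [← ofReal_integral_eq_lintegral_ofReal (hgN_int N) (ae_of_all _ (hgN_nonneg N))]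
        exact ENNReal.ofReal_le_ofReal (hB N)
    _ < ⊤ := ENNReal.ofReal_lt_top

theorem lintegral_exp_le_of_tendsto {α : Type*} [MeasurableSpace α] {μ : Measure α}
    {fN : ℕ → α → ℝ} {f : α → ℝ} (hfN : ∀ N, Measurable (fN N))
    (hlim : ∀ x, Tendsto (fun N => fN N x) atTop (𝓝 (f x)))
    (hmean : Tendsto (fun N => ∫ x, fN N x ∂μ) atTop (𝓝 (∫ x, f x ∂μ))) {t C : ℝ}
    (hbound : ∀ N, ∫⁻ x, ENNReal.ofReal (exp (t * fN N x)) ∂μ ≤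
      ENNReal.ofReal (exp (t * ∫ x, fN N x ∂μ + C))) :
    ∫⁻ x, ENNReal.ofReal (exp (t * f x)) ∂μ ≤ ENNReal.ofReal (exp (t * ∫ x, f x ∂μ + C)) := by
  have hexp : Continuous fun y : ℝ => ENNReal.ofReal (exp (t * y)) :=
    ENNReal.continuous_ofReal.comp (by fun_prop)
  have hexp' : Continuous fun m : ℝ => ENNReal.ofReal (exp (t * m + C)) :=
    ENNReal.continuous_ofReal.comp (by fun_prop)
  calc ∫⁻ x, ENNReal.ofReal (exp (t * f x)) ∂μ
      = ∫⁻ x, liminf (fun N => ENNReal.ofReal (exp (t * fN N x))) atTop ∂μ :=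
        lintegral_congr fun x => ((hexp.tendsto _).comp (hlim x)).liminf_eq.symm
    _ ≤ liminf (fun N => ∫⁻ x, ENNReal.ofReal (exp (t * fN N x)) ∂μ) atTop :=
        lintegral_liminf_le fun N => hexp.measurable.comp (hfN N)
    _ ≤ liminf (fun N => ENNReal.ofReal (exp (t * ∫ x, fN N x ∂μ + C))) atTop :=
        liminf_le_liminf (Eventually.of_forall hbound)
    _ = ENNReal.ofReal (exp (t * ∫ x, f x ∂μ + C)) := ((hexp'.tendsto _).comp hmean).liminf_eq

namespace GaussianConcentration

variable [OpensMeasurableSpace X] {κ : ℝ} {μ : Measure X} [IsProbabilityMeasure μ]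

/-- Testing `GC(κ)` at `t = -1` on the truncations `min (d(·, x₀)) N` keeps their means below
`κ / 2 - log ∫ exp (-d(·, x₀))`. -/
theorem integrable_dist (h : GaussianConcentration κ μ) (x₀ : X) :
    Integrable (fun x => dist x x₀) μ := by
  have hd : Continuous fun x => dist x x₀ := continuous_id.dist continuous_const
  have hexp_int {g : X → ℝ} (hg : Continuous g) (hg0 : ∀ x, 0 ≤ g x) :
      Integrable (fun x => exp (-g x)) μ :=
    .of_bound (by fun_prop) 1 (ae_of_all _ fun x => by
      rw [Real.norm_eq_abs, abs_of_pos (exp_pos _), exp_le_one_iff]; linarith [hg0 x])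
  refine integrable_of_integral_min_le hd.measurable (fun _ => dist_nonneg)
    (B := κ / 2 - log (∫ x, exp (-dist x x₀) ∂μ)) fun N => ?_
  have hlip : LipschitzWith 1 fun x => min (dist x x₀) N := (LipschitzWith.dist_left x₀).min_const N
  have hnonneg (x : X) : 0 ≤ min (dist x x₀) N := le_min dist_nonneg N.cast_nonneg
  have hint : Integrable (fun x => min (dist x x₀) N) μ :=
    .of_bound hlip.continuous.aestronglyMeasurable N (ae_of_all _ fun x => by
      rw [Real.norm_eq_abs, abs_of_nonneg (hnonneg x)]; exact min_le_right _ _)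
  have hGC := h _ hlip hint (-1)
  have hmono : ∫ x, exp (-dist x x₀) ∂μ ≤ ∫ x, exp (-1 * min (dist x x₀) N) ∂μ := by
    simp only [neg_one_mul]
    exact integral_mono (hexp_int hd fun _ => dist_nonneg) (hexp_int hlip.continuous hnonneg)
      fun x => exp_le_exp.2 (neg_le_neg (min_le_left _ _))
  have := log_le_log (integral_exp_pos (hexp_int hd fun _ => dist_nonneg)) (hmono.trans hGC)
  rw [log_exp] at this
  linarith

theorem integrable_of_lipschitzWith (h : GaussianConcentration κ μ) {K : ℝ≥0} {f : X → ℝ}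
    (hf : LipschitzWith K f) : Integrable f μ :=
  have : Nonempty X := nonempty_of_isProbabilityMeasure μ
  hf.integrable_of_integrable_dist (h.integrable_dist Classical.ofNonempty)

theorem integral_exp_le_of_lipschitzWith (h : GaussianConcentration κ μ) {K : ℝ≥0} (hK : 0 < K)
    {f : X → ℝ} (hf : LipschitzWith K f) (t : ℝ) :
    ∫ x, exp (t * f x) ∂μ ≤ exp (t * ∫ x, f x ∂μ + κ * K ^ 2 * t ^ 2 / 2) := by
  have hlip : LipschitzWith 1 (fun x => (K : ℝ)⁻¹ * f x) := by
    have := (lipschitzWith_smul (K : ℝ)⁻¹).comp hf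
    rwa [nnnorm_inv, NNReal.nnnorm_eq, inv_mul_cancel₀ hK.ne'] at this
  have := h _ hlip ((h.integrable_of_lipschitzWith hf).const_mul _) (t * K)
  simp only [integral_const_mul] at this
  convert this using 3 <;> field_simp

/-- The Bochner integral of `exp (t f)` is junk unless it is integrable, so `GC(κ)` is applied to
the bounded truncations of `f` and passed to the limit with Fatou's lemma. -/
theorem lintegral_exp_le (h : GaussianConcentration κ μ) {K : ℝ≥0} (hK : 0 < K) {f : X → ℝ}
    (hf : LipschitzWith K f) (t : ℝ) :
    ∫⁻ x, ENNReal.ofReal (exp (t * f x)) ∂μ ≤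
      ENNReal.ofReal (exp (t * ∫ x, f x ∂μ + κ * K ^ 2 * t ^ 2 / 2)) := by
  set fN : ℕ → X → ℝ := fun N x => max (min (f x) N) (-N)
  have hfN_lip (N : ℕ) : LipschitzWith K (fN N) := (hf.min_const N).max_const _
  have hfN_le_N (N : ℕ) (x : X) : |fN N x| ≤ N := by
    rw [abs_le]; constructor <;> simp [fN]
  have hfN_le_f (N : ℕ) (x : X) : |fN N x| ≤ |f x| := by
    have := N.cast_nonneg (α := ℝ)
    rw [abs_le]; constructor <;> grind
  have hfN_tendsto (x : X) : Tendsto (fun N => fN N x) atTop (𝓝 (f x)) := by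
    refine tendsto_const_nhds.congr' ?_
    obtain ⟨N₀, hN₀⟩ := exists_nat_ge |f x|
    filter_upwards [eventually_ge_atTop N₀] with N hN
    have hx := abs_le.1 (hN₀.trans (Nat.cast_le.2 hN))
    simp only [fN, min_eq_left hx.2, max_eq_left hx.1]
  have hmean : Tendsto (fun N => ∫ x, fN N x ∂μ) atTop (𝓝 (∫ x, f x ∂μ)) :=
    tendsto_integral_of_dominated_convergence _
      (fun N => (hfN_lip N).continuous.aestronglyMeasurable) (h.integrable_of_lipschitzWith hf).abs
      (fun N => ae_of_all _ (hfN_le_f N)) (ae_of_all _ hfN_tendsto)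
  have hfN_GC (N : ℕ) : ∫⁻ x, ENNReal.ofReal (exp (t * fN N x)) ∂μ ≤
      ENNReal.ofReal (exp (t * ∫ x, fN N x ∂μ + κ * K ^ 2 * t ^ 2 / 2)) := by
    have hint : Integrable (fun x => exp (t * fN N x)) μ :=
      .of_bound ((hfN_lip N).continuous.measurable.const_mul t).exp.aestronglyMeasurable
        (exp (|t| * N)) (ae_of_all _ fun x => by
          rw [Real.norm_eq_abs, abs_of_pos (exp_pos _), exp_le_exp]
          exact (le_abs_self _).trans (by rw [abs_mul]; gcongr; exact hfN_le_N N x))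
    rw [← ofReal_integral_eq_lintegral_ofReal hint (ae_of_all _ fun _ => (exp_pos _).le)]
    exact ENNReal.ofReal_le_ofReal (h.integral_exp_le_of_lipschitzWith hK (hfN_lip N) t)
  exact lintegral_exp_le_of_tendsto (fun N => (hfN_lip N).continuous.measurable) hfN_tendsto hmean
    hfN_GC

end GaussianConcentration

section Wasserstein

variable [OpensMeasurableSpace X] {ν₁ ν₂ : Measure X}

theorem abs_integral_sub_le_mul_integral_dist {cpl : Measure (X × X)}
    (h₁ : cpl.map Prod.fst = ν₁) (h₂ : cpl.map Prod.snd = ν₂)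
    (hcost : Integrable (fun z => dist z.1 z.2) cpl) {K : ℝ≥0} {f : X → ℝ}
    (hf : LipschitzWith K f) (hf₁ : Integrable f ν₁) (hf₂ : Integrable f ν₂) :
    |∫ x, f x ∂ν₁ - ∫ x, f x ∂ν₂| ≤ K * ∫ z, dist z.1 z.2 ∂cpl := by
  subst h₁ h₂
  have hfm := hf.continuous.aestronglyMeasurable (μ := cpl.map Prod.fst)
  have hfm' := hf.continuous.aestronglyMeasurable (μ := cpl.map Prod.snd)
  have hf₁' : Integrable (fun z => f z.1) cpl :=
    (integrable_map_measure hfm measurable_fst.aemeasurable).1 hf₁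
  have hf₂' : Integrable (fun z => f z.2) cpl :=
    (integrable_map_measure hfm' measurable_snd.aemeasurable).1 hf₂
  rw [integral_map measurable_fst.aemeasurable hfm, integral_map measurable_snd.aemeasurable hfm',
    ← integral_sub hf₁' hf₂', ← integral_const_mul]
  refine abs_integral_le_integral_abs.trans (integral_mono_of_nonneg
    (ae_of_all _ fun _ => abs_nonneg _) (hcost.const_mul _) (ae_of_all _ fun z => ?_))
  simpa [Real.dist_eq] using hf.dist_le_mul z.1 z.2

variable [SecondCountableTopology X] [IsProbabilityMeasure ν₁] [IsProbabilityMeasure ν₂]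

theorem abs_integral_sub_le_mul_wasserstein1 {x₀ : X}
    (h₁ : Integrable (fun x => dist x x₀) ν₁) (h₂ : Integrable (fun x => dist x x₀) ν₂)
    {K : ℝ≥0} {f : X → ℝ} (hf : LipschitzWith K f) :
    |∫ x, f x ∂ν₁ - ∫ x, f x ∂ν₂| ≤ K * wasserstein1 ν₁ ν₂ := by
  have hprod : Integrable (fun z : X × X => dist z.1 z.2) (ν₁.prod ν₂) := by
    refine ((h₁.comp_fst ν₂).add ((h₂.comp_snd ν₁))).mono'
      (continuous_fst.dist continuous_snd).aestronglyMeasurable (ae_of_all _ fun z => ?_)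
    rw [Real.norm_eq_abs, abs_of_nonneg dist_nonneg]
    exact dist_triangle_right _ _ x₀
  rw [wasserstein1, ← smul_eq_mul, ← Real.sInf_smul_of_nonneg K.coe_nonneg]
  have hne : { c | ∃ cpl : Measure (X × X), cpl.map Prod.fst = ν₁ ∧ cpl.map Prod.snd = ν₂ ∧
      Integrable (fun z => dist z.1 z.2) cpl ∧ c = ∫ z, dist z.1 z.2 ∂cpl }.Nonempty :=
    ⟨_, ν₁.prod ν₂, Measure.fst_prod, Measure.snd_prod, hprod, rfl⟩
  refine le_csInf hne.smul_set ?_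
  rintro _ ⟨_, ⟨cpl, hfst, hsnd, hcost, rfl⟩, rfl⟩
  exact abs_integral_sub_le_mul_integral_dist hfst hsnd hcost hf
    (hf.integrable_of_integrable_dist h₁) (hf.integrable_of_integrable_dist h₂)

end Wasserstein

section MarkovJointLaw

variable {Y : Type*} [MeasurableSpace Y] (P1 : Measure Y) (p : Kernel Y Y) [IsMarkovKernel p]

theorem measurable_snoc (n : ℕ) :
    Measurable fun q : (Fin (n + 1) → Y) × Y => (Fin.snoc q.1 q.2 : Fin (n + 2) → Y) := by
  refine measurable_pi_iff.2 fun i => Fin.lastCases ?_ (fun j => ?_) i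
  · simpa using measurable_snd
  · simpa [Function.comp_def] using (measurable_pi_apply j).comp measurable_fst

noncomputable def markovStep (n : ℕ) : Kernel (Fin (n + 1) → Y) Y :=
  p.comap (fun xs => xs (Fin.last n)) (measurable_pi_apply _)

instance isMarkovKernel_markovStep (n : ℕ) : IsMarkovKernel (markovStep p n) := by
  unfold markovStep; infer_instance

theorem markovJointLaw_succ_eq_map_compProd (n : ℕ) [SFinite (markovJointLaw P1 p n)] :
    markovJointLaw P1 p (n + 1) =
      (markovJointLaw P1 p n ⊗ₘ markovStep p n).map fun q => Fin.snoc q.1 q.2 := by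
  have hsnoc (xs : Fin (n + 1) → Y) : Measurable fun y => (Fin.snoc xs y : Fin (n + 2) → Y) :=
    (measurable_snoc n).comp measurable_prodMk_left
  have hstep : Measurable fun xs : Fin (n + 1) → Y =>
      (p (xs (Fin.last n))).map fun y => (Fin.snoc xs y : Fin (n + 2) → Y) := by
    refine Measure.measurable_of_measurable_coe _ fun s hs => ?_
    simp_rw [Measure.map_apply (hsnoc _) hs]
    exact Kernel.measurable_kernel_prodMk_left (κ := markovStep p n) (measurable_snoc n hs)
  ext s hs
  rw [markovJointLaw, Measure.bind_apply hs hstep.aemeasurable,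
    Measure.map_apply (measurable_snoc n) hs, Measure.compProd_apply (measurable_snoc n hs)]
  refine lintegral_congr fun xs => ?_
  rw [Measure.map_apply (hsnoc xs) hs]
  rfl

variable [IsProbabilityMeasure P1]

instance isProbabilityMeasure_markovJointLaw (n : ℕ) :
    IsProbabilityMeasure (markovJointLaw P1 p n) := by
  induction n with
  | zero => exact Measure.isProbabilityMeasure_map (by fun_prop)
  | succ n ih =>
    rw [markovJointLaw_succ_eq_map_compProd]
    exact Measure.isProbabilityMeasure_map (measurable_snoc n).aemeasurable

theorem lintegral_markovJointLaw_succ (n : ℕ) {f : (Fin (n + 2) → Y) → ℝ≥0∞}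
    (hf : Measurable f) :
    ∫⁻ xs, f xs ∂markovJointLaw P1 p (n + 1) =
      ∫⁻ xs, ∫⁻ y, f (Fin.snoc xs y) ∂p (xs (Fin.last n)) ∂markovJointLaw P1 p n := by
  rw [markovJointLaw_succ_eq_map_compProd, lintegral_map hf (measurable_snoc n),
    Measure.lintegral_compProd (f := fun q => f (Fin.snoc q.1 q.2))
      (hf.comp (measurable_snoc n))]
  rfl

noncomputable def markovCondExp {n : ℕ} (F : (Fin (n + 2) → Y) → ℝ)
    (xs : Fin (n + 1) → Y) : ℝ :=
  ∫ y, F (Fin.snoc xs y) ∂p (xs (Fin.last n))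

variable [TopologicalSpace Y] [SecondCountableTopology Y] [OpensMeasurableSpace Y]

theorem integrable_markovCondExp {n : ℕ} {F : (Fin (n + 2) → Y) → ℝ} (hFc : Continuous F)
    (hF : Integrable F (markovJointLaw P1 p (n + 1))) :
    Integrable (markovCondExp p F) (markovJointLaw P1 p n) := by
  rw [markovJointLaw_succ_eq_map_compProd, integrable_map_measure hFc.aestronglyMeasurable
    (measurable_snoc n).aemeasurable] at hF
  exact hF.integral_compProd

theorem integral_markovCondExp {n : ℕ} {F : (Fin (n + 2) → Y) → ℝ} (hFc : Continuous F)
    (hF : Integrable F (markovJointLaw P1 p (n + 1))) :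
    ∫ xs, markovCondExp p F xs ∂markovJointLaw P1 p n =
      ∫ xs, F xs ∂markovJointLaw P1 p (n + 1) := by
  rw [markovJointLaw_succ_eq_map_compProd, integrable_map_measure hFc.aestronglyMeasurable
    (measurable_snoc n).aemeasurable, Function.comp_def] at hF
  rw [markovJointLaw_succ_eq_map_compProd,
    integral_map (measurable_snoc n).aemeasurable hFc.aestronglyMeasurable,
    Measure.integral_compProd hF]
  rfl

end MarkovJointLaw

/-- The weight of coordinate `i` once the coordinates after it have been integrated out one at a
time. -/
def propagatedWeight (L : ℝ) (c : ℕ → ℝ) (n i : ℕ) : ℝ :=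
  ∑ j ∈ Ico i (n + 1), L ^ (j - i) * c j

theorem propagatedWeight_update {L : ℝ} {c : ℕ → ℝ} {n i : ℕ} (hi : i ≤ n) :
    propagatedWeight L (Function.update c n (c n + L * c (n + 1))) n i =
      propagatedWeight L c (n + 1) i := by
  have hlt : ∀ j ∈ Ico i n, Function.update c n (c n + L * c (n + 1)) j = c j :=
    fun j hj => Function.update_of_ne (mem_Ico.1 hj).2.ne _ _
  rw [propagatedWeight, propagatedWeight, sum_Ico_succ_top hi, sum_Ico_succ_top (by omega),
    sum_Ico_succ_top hi, sum_congr rfl fun j hj => by rw [hlt j hj], Function.update_self,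
    show n + 1 - i = n - i + 1 by omega, pow_succ]
  ring

theorem sum_sq_propagatedWeight_succ (L : ℝ) (c : ℕ → ℝ) (n : ℕ) :
    ∑ i ∈ range (n + 2), propagatedWeight L c (n + 1) i ^ 2 =
      ∑ i ∈ range (n + 1),
          propagatedWeight L (Function.update c n (c n + L * c (n + 1))) n i ^ 2 +
        c (n + 1) ^ 2 := by
  rw [sum_range_succ, sum_congr rfl fun i hi => by
    rw [← propagatedWeight_update (Nat.lt_succ_iff.1 (mem_range.1 hi))]]
  simp [propagatedWeight]

theorem sum_sq_propagatedWeight_one (L : ℝ) (n : ℕ) :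
    ∑ i ∈ range (n + 1), propagatedWeight L 1 n i ^ 2 =
      ∑ m ∈ range (n + 1), (∑ k ∈ range (m + 1), L ^ k) ^ 2 := by
  rw [← sum_range_reflect]
  refine sum_congr rfl fun m hm => ?_
  have hm := mem_range.1 hm
  rw [propagatedWeight, sum_Ico_eq_sum_range, show n + 1 - (n + 1 - 1 - m) = m + 1 by omega]
  simp

section WeightedLipschitz

variable {Y : Type*} [PseudoMetricSpace Y]

def LipschitzWithWeights {n : ℕ} (c : ℕ → ℝ) (F : (Fin n → Y) → ℝ) : Prop :=
  ∀ a b, |F a - F b| ≤ ∑ i : Fin n, c i * dist (a i) (b i)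

theorem LipschitzWithWeights.continuous {n : ℕ} {c : ℕ → ℝ} {F : (Fin n → Y) → ℝ}
    (hF : LipschitzWithWeights c F) (hc : ∀ k, 0 ≤ c k) : Continuous F := by
  refine (LipschitzWith.of_dist_le_mul (K := ⟨∑ i : Fin n, c i, sum_nonneg fun i _ => hc i⟩)
    fun a b => ?_).continuous
  change |F a - F b| ≤ (∑ i : Fin n, c i) * dist a b
  rw [sum_mul]
  exact (hF a b).trans
    (sum_le_sum fun i _ => mul_le_mul_of_nonneg_left (dist_le_pi_dist a b i) (hc i))

theorem sum_mul_dist_snoc (c : ℕ → ℝ) {n : ℕ} (a b : Fin (n + 1) → Y) (y z : Y) :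
    ∑ i : Fin (n + 2),
        c i * dist (Fin.snoc (α := fun _ => Y) a y i) (Fin.snoc (α := fun _ => Y) b z i) =
      ∑ i : Fin (n + 1), c i * dist (a i) (b i) + c (n + 1) * dist y z := by
  simp [Fin.sum_univ_castSucc]

theorem LipschitzWithWeights.lipschitzWith_snoc {n : ℕ} {c : ℕ → ℝ}
    {F : (Fin (n + 2) → Y) → ℝ} (hF : LipschitzWithWeights c F) (hc : 0 ≤ c (n + 1))
    (xs : Fin (n + 1) → Y) :
    LipschitzWith ⟨c (n + 1), hc⟩ fun y => F (Fin.snoc xs y) :=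
  LipschitzWith.of_dist_le_mul fun y z => by
    have := hF (Fin.snoc xs y) (Fin.snoc xs z)
    simp only [sum_mul_dist_snoc, dist_self, mul_zero, sum_const_zero, zero_add] at this
    exact this

end WeightedLipschitz

section MarkovConcentration

variable [SecondCountableTopology X] [OpensMeasurableSpace X] {P1 : Measure X} {p : Kernel X X}
  [IsProbabilityMeasure P1] [IsMarkovKernel p] {κ L : ℝ}

theorem lipschitzWithWeights_markovCondExp (hGCp : ∀ x, GaussianConcentration κ (p x))
    (hLip : ∀ x y, wasserstein1 (p x) (p y) ≤ L * dist x y)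
    {n : ℕ} {c : ℕ → ℝ} (hc : 0 ≤ c (n + 1)) {F : (Fin (n + 2) → X) → ℝ}
    (hF : LipschitzWithWeights c F) :
    LipschitzWithWeights (Function.update c n (c n + L * c (n + 1))) (markovCondExp p F) := by
  intro a b
  have hlip := hF.lipschitzWith_snoc hc
  have hprefix : |markovCondExp p F a - ∫ y, F (Fin.snoc b y) ∂p (a (Fin.last n))| ≤
      ∑ i : Fin (n + 1), c i * dist (a i) (b i) := by
    rw [markovCondExp, ← integral_sub ((hGCp _).integrable_of_lipschitzWith (hlip a))
      ((hGCp _).integrable_of_lipschitzWith (hlip b))]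
    have hpt (y : X) :
        ‖F (Fin.snoc a y) - F (Fin.snoc b y)‖ ≤ ∑ i : Fin (n + 1), c i * dist (a i) (b i) := by
      simpa [sum_mul_dist_snoc] using hF (Fin.snoc a y) (Fin.snoc b y)
    simpa using norm_integral_le_of_norm_le_const (μ := p (a (Fin.last n))) (ae_of_all _ hpt)
  have hlast : |∫ y, F (Fin.snoc b y) ∂p (a (Fin.last n)) - markovCondExp p F b| ≤
      c (n + 1) * (L * dist (a (Fin.last n)) (b (Fin.last n))) :=
    (abs_integral_sub_le_mul_wasserstein1 ((hGCp _).integrable_dist (a 0))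
      ((hGCp _).integrable_dist (a 0)) (hlip b)).trans
      (mul_le_mul_of_nonneg_left (hLip _ _) hc)
  have hweights :
      ∑ i : Fin (n + 1), Function.update c n (c n + L * c (n + 1)) i * dist (a i) (b i) =
        ∑ i : Fin (n + 1), c i * dist (a i) (b i) +
        c (n + 1) * (L * dist (a (Fin.last n)) (b (Fin.last n))) := by
    simp only [Fin.sum_univ_castSucc, Fin.val_castSucc, Fin.val_last, Function.update_self]
    rw [sum_congr rfl fun i _ => by rw [Function.update_of_ne i.isLt.ne]]
    ring
  rw [hweights]
  exact (abs_sub_le _ _ _).trans (add_le_add hprefix hlast)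

theorem lintegral_exp_markovJointLaw_succ_le (hGCp : ∀ x, GaussianConcentration κ (p x))
    {n : ℕ} {c : ℕ → ℝ} (hc : 0 < c (n + 1)) {F : (Fin (n + 2) → X) → ℝ}
    (hF : LipschitzWithWeights c F) (hFc : Continuous F) (t : ℝ) :
    ∫⁻ xs, ENNReal.ofReal (exp (t * F xs)) ∂markovJointLaw P1 p (n + 1) ≤
      (∫⁻ xs, ENNReal.ofReal (exp (t * markovCondExp p F xs)) ∂markovJointLaw P1 p n) *
        ENNReal.ofReal (exp (κ * c (n + 1) ^ 2 * t ^ 2 / 2)) := by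
  rw [lintegral_markovJointLaw_succ _ _ _ (hFc.measurable.const_mul t).exp.ennreal_ofReal,
    ← lintegral_mul_const' _ _ ENNReal.ofReal_ne_top]
  refine lintegral_mono fun xs => ?_
  rw [← ENNReal.ofReal_mul (exp_pos _).le, ← exp_add]
  exact (hGCp _).lintegral_exp_le (K := ⟨c (n + 1), hc.le⟩) hc
    (hF.lipschitzWith_snoc hc.le xs) t

theorem lintegral_exp_markovJointLaw_le (hL : 0 ≤ L) (hGC1 : GaussianConcentration κ P1)
    (hGCp : ∀ x, GaussianConcentration κ (p x))
    (hLip : ∀ x y, wasserstein1 (p x) (p y) ≤ L * dist x y)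
    (n : ℕ) {c : ℕ → ℝ} (hc : ∀ k, 0 < c k) {F : (Fin (n + 1) → X) → ℝ}
    (hF : LipschitzWithWeights c F) (hFi : Integrable F (markovJointLaw P1 p n)) (t : ℝ) :
    ∫⁻ xs, ENNReal.ofReal (exp (t * F xs)) ∂markovJointLaw P1 p n ≤
      ENNReal.ofReal (exp (t * ∫ xs, F xs ∂markovJointLaw P1 p n +
        κ * (∑ i ∈ range (n + 1), propagatedWeight L c n i ^ 2) * t ^ 2 / 2)) := by
  have hFc := hF.continuous fun k => (hc k).le
  induction n generalizing c with
  | zero =>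
    have hdiag : Measurable fun x : X => fun _ : Fin 1 => x :=
      measurable_pi_lambda _ fun _ => measurable_id
    have hlip : LipschitzWith ⟨c 0, (hc 0).le⟩ fun x => F fun _ => x :=
      LipschitzWith.of_dist_le_mul fun x y => by
        have := hF (fun _ => x) (fun _ => y)
        rw [Fin.sum_univ_one] at this
        exact this
    have hweight : ∑ i ∈ range (0 + 1), propagatedWeight L c 0 i ^ 2 = c 0 ^ 2 := by
      simp [propagatedWeight]
    rw [markovJointLaw, lintegral_map (hFc.measurable.const_mul t).exp.ennreal_ofReal hdiag,
      integral_map hdiag.aemeasurable hFc.aestronglyMeasurable, hweight]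
    exact hGC1.lintegral_exp_le (K := ⟨c 0, (hc 0).le⟩) (hc 0) hlip t
  | succ n ih =>
    have hc' (k : ℕ) : 0 < Function.update c n (c n + L * c (n + 1)) k := by
      rcases eq_or_ne k n with rfl | hk
      · rw [Function.update_self]
        exact add_pos_of_pos_of_nonneg (hc k) (mul_nonneg hL (hc (k + 1)).le)
      · rw [Function.update_of_ne hk]; exact hc k
    have hG := lipschitzWithWeights_markovCondExp hGCp hLip (hc _).le hF
    calc _ ≤ _ := lintegral_exp_markovJointLaw_succ_le hGCp (hc _) hF hFc t
      _ ≤ _ := mul_le_mul_left (ih hc' hG (integrable_markovCondExp _ _ hFc hFi)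
          (hG.continuous fun k => (hc' k).le)) _
      _ = _ := by
        rw [← ENNReal.ofReal_mul (exp_pos _).le, ← exp_add, integral_markovCondExp _ _ hFc hFi,
          sum_sq_propagatedWeight_succ]
        ring_nf

end MarkovConcentration

theorem markov_gaussian_concentration_general [PolishSpace X] [BorelSpace X]
    (P1 : Measure X) [IsProbabilityMeasure P1] (p : Kernel X X) [IsMarkovKernel p]
    (κ₁ L : ℝ) (hL : 0 ≤ L)
    (hGC1 : GaussianConcentration κ₁ P1)
    (hGCp : ∀ x : X, GaussianConcentration κ₁ (p x))
    (hLip : ∀ x y : X, wasserstein1 (p x) (p y) ≤ L * dist x y)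
    (n : ℕ) :
    ∀ F : (Fin (n + 1) → X) → ℝ,
      (∀ a b : Fin (n + 1) → X, |F a - F b| ≤ ∑ i : Fin (n + 1), dist (a i) (b i)) →
      Integrable F (markovJointLaw P1 p n) → ∀ t : ℝ,
        ∫ xs, Real.exp (t * F xs) ∂(markovJointLaw P1 p n) ≤
          Real.exp (t * ∫ xs, F xs ∂(markovJointLaw P1 p n) +
            (κ₁ * ∑ m ∈ range (n + 1), (∑ k ∈ range (m + 1), L ^ k) ^ 2) * t ^ 2 / 2) := by
  intro F hF hFi t
  have hF1 : LipschitzWithWeights 1 F := by simpa [LipschitzWithWeights] using hF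
  have hbound :=
    lintegral_exp_markovJointLaw_le hL hGC1 hGCp hLip n (c := 1) (fun _ => one_pos) hF1 hFi t
  rw [sum_sq_propagatedWeight_one] at hbound
  rw [integral_eq_lintegral_of_nonneg_ae (ae_of_all _ fun _ => (exp_pos _).le)
    ((hF1.continuous fun _ => zero_le_one).measurable.const_mul t).exp.aestronglyMeasurable]
  exact ENNReal.toReal_le_of_le_ofReal (exp_pos _).le hbound

/-- Theorem 1.1: if `P^{(1)}` and every `p(·|x)` satisfy `GC(κ₁)` and `x ↦ p(·|x)` is
`L`-Lipschitz into `(Prob₁(X), W₁)`, then the joint law of the first `n+1` variables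
satisfies `GC(κ₁ ∑_{m=1}^{n+1} (∑_{k=0}^{m-1} L^k)²)` on `(X^{n+1}, d^{(1)})`, i.e. for
every function `F` that is `1`-Lipschitz for the ℓ¹-metric `∑_i d(x_i, y_i)`. -/
theorem markov_gaussian_concentration [PolishSpace X] [BorelSpace X]
    (P1 : Measure X) [IsProbabilityMeasure P1] (p : Kernel X X) [IsMarkovKernel p]
    (κ₁ L : ℝ) (hκ : 0 < κ₁) (hL : 0 ≤ L)
    (hGC1 : GaussianConcentration κ₁ P1)
    (hGCp : ∀ x : X, GaussianConcentration κ₁ (p x))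
    (hLip : ∀ x y : X, wasserstein1 (p x) (p y) ≤ L * dist x y)
    (n : ℕ) :
    ∀ F : (Fin (n + 1) → X) → ℝ,
      (∀ a b : Fin (n + 1) → X, |F a - F b| ≤ ∑ i : Fin (n + 1), dist (a i) (b i)) →
      Integrable F (markovJointLaw P1 p n) → ∀ t : ℝ,
        ∫ xs, Real.exp (t * F xs) ∂(markovJointLaw P1 p n) ≤
          Real.exp (t * ∫ xs, F xs ∂(markovJointLaw P1 p n) +
            (κ₁ * ∑ m ∈ range (n + 1), (∑ k ∈ range (m + 1), L ^ k) ^ 2) * t ^ 2 / 2) :=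
  markov_gaussian_concentration_general P1 p κ₁ L hL hGC1 hGCp hLip n
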